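/- Let a > 0, let b ∈ ℝ^n be a row vector, let m ∈ O(h), and let x ∈ ℝ^n be a point with D_{a,b,m}(x) ≠ 0. Then φ_{a,b,m} is differentiable at x and its Jacobian matrix φ'(x) satisfies φ'(x)ᵀ h φ'(x) = Ω_{a,b,m}(x)² h; that is, the pullback under φ_{a,b,m} of the flat metric determined by h equals Ω_{a,b,m}² times that metric, so φ_{a,b,m} is a conformal transformation with conformal factor Ω_{a,b,m}. -/

import Mathlib

open Matrix

noncomputable section

abbrev Idx (p q : ℕ) : Type := Unit ⊕ (Fin (p + q)) ⊕ Unit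

/-- The diagonal quadratic form of signature `(p,q)` on `ℝ^n`, `n = p + q`. -/
def hMat (p q : ℕ) : Matrix (Fin (p + q)) (Fin (p + q)) ℝ :=
  Matrix.diagonal fun i => if (i : ℕ) < p then (1 : ℝ) else -1

/-- The quadratic form of signature `(p+1,q+1)` on `ℝ^{n+2}`, in block form
`[[0,0,1],[0,h,0],[1,0,0]]`. -/
def htMat (p q : ℕ) : Matrix (Idx p q) (Idx p q) ℝ :=
  Matrix.of fun I J =>
    match I, J with
    | Sum.inl _, Sum.inr (Sum.inr _) => (1 : ℝ)
    | Sum.inr (Sum.inr _), Sum.inl _ => 1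
    | Sum.inr (Sum.inl i), Sum.inr (Sum.inl j) => hMat p q i j
    | _, _ => 0

/-- The first standard basis vector `e₀` of `ℝ^{n+2}`. -/
def e0 (p q : ℕ) : Idx p q → ℝ := fun I =>
  match I with
  | Sum.inl _ => 1
  | _ => 0

/-- `c = -(2a)⁻¹ b h⁻¹ bᵀ`. -/
def cVal (p q : ℕ) (a : ℝ) (b : Fin (p + q) → ℝ) : ℝ :=
  -(2 * a)⁻¹ * (b ⬝ᵥ ((hMat p q)⁻¹ *ᵥ b))

/-- `d = -a⁻¹ m h⁻¹ bᵀ`. -/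
def dVec (p q : ℕ) (a : ℝ) (b : Fin (p + q) → ℝ)
    (m : Matrix (Fin (p + q)) (Fin (p + q)) ℝ) : Fin (p + q) → ℝ :=
  (-a⁻¹) • (m *ᵥ ((hMat p q)⁻¹ *ᵥ b))

/-- The element `p(a,b,m)` of the parabolic subgroup, in block form
`[[a,b,c],[0,m,d],[0,0,a⁻¹]]`. -/
def pMat (p q : ℕ) (a : ℝ) (b : Fin (p + q) → ℝ)
    (m : Matrix (Fin (p + q)) (Fin (p + q)) ℝ) : Matrix (Idx p q) (Idx p q) ℝ :=
  Matrix.of fun I J =>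
    match I, J with
    | Sum.inl _, Sum.inl _ => a
    | Sum.inl _, Sum.inr (Sum.inl j) => b j
    | Sum.inl _, Sum.inr (Sum.inr _) => cVal p q a b
    | Sum.inr (Sum.inl i), Sum.inr (Sum.inl j) => m i j
    | Sum.inr (Sum.inl i), Sum.inr (Sum.inr _) => dVec p q a b m i
    | Sum.inr (Sum.inr _), Sum.inr (Sum.inr _) => a⁻¹
    | _, _ => 0

/-- `|x|² = xᵀ h x`. -/
def normSq (p q : ℕ) (x : Fin (p + q) → ℝ) : ℝ := x ⬝ᵥ (hMat p q *ᵥ x)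

/-- The denominator `D(x) = a + b x - ½ c |x|²`. -/
def Dden (p q : ℕ) (a : ℝ) (b x : Fin (p + q) → ℝ) : ℝ :=
  a + b ⬝ᵥ x - (1 / 2) * cVal p q a b * normSq p q x

/-- The conformal transformation `φ(x) = (m x - ½|x|² d)/D(x)`. -/
def phiMap (p q : ℕ) (a : ℝ) (b : Fin (p + q) → ℝ)
    (m : Matrix (Fin (p + q)) (Fin (p + q)) ℝ) (x : Fin (p + q) → ℝ) :
    Fin (p + q) → ℝ :=
  (Dden p q a b x)⁻¹ • (m *ᵥ x - ((1 / 2) * normSq p q x) • dVec p q a b m)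

/-- The conformal factor `Ω(x) = D(x)⁻¹`. -/
def OmegaFn (p q : ℕ) (a : ℝ) (b : Fin (p + q) → ℝ) (x : Fin (p + q) → ℝ) : ℝ :=
  (Dden p q a b x)⁻¹

/-- Jacobian matrix of a map at a point: `J i j = ∂ⱼ φⁱ (x)`. -/
def jacobianAt (p q : ℕ) (φ : (Fin (p + q) → ℝ) → (Fin (p + q) → ℝ))
    (x : Fin (p + q) → ℝ) : Matrix (Fin (p + q)) (Fin (p + q)) ℝ :=
  Matrix.of fun i j => fderiv ℝ φ x (Pi.single j 1) i

/-- Row vector of partial derivatives of a scalar function at a point. -/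
def gradAt (p q : ℕ) (f : (Fin (p + q) → ℝ) → ℝ) (x : Fin (p + q) → ℝ) :
    Fin (p + q) → ℝ :=
  fun j => fderiv ℝ f x (Pi.single j 1)

/-!
`x ↦ (1, x, -½|x|²)` is an isometric embedding of `(ℝⁿ, h)` into the null cone of `htMat`, of
signature `(p + 1, q + 1)`, and `pMat p q a b m`, which preserves `htMat`, maps it to the lift
`(D(x), F(x), E(x))`, where `D` is the denominator and `F` the numerator of `φ` and
`E(x) = -|x|²/(2a)`. So the lift is null, orthogonal to its derivatives, and its derivatives pair
like `h`. Differentiating `φ = F / D`, these three facts make every term cancel except `D⁻² ⟨v, w⟩`.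
-/

open LinearMap (BilinForm)

section Projectivization

variable {𝕜 V : Type*} [Field 𝕜] [AddCommGroup V] [Module 𝕜 V]

/-- `(D, F, E)` is a null vector of the form `[[0,0,1],[0,B,0],[1,0,0]]` on `𝕜 × V × 𝕜`,
orthogonal to `(D₁, F₁, E₁)` and `(D₂, F₂, E₂)`. -/
theorem LinearMap.BilinForm.IsSymm.apply_inv_smul_sub_smul {B : BilinForm 𝕜 V} (hB : B.IsSymm)
    {D E D₁ D₂ E₁ E₂ : 𝕜} {F F₁ F₂ : V} (hD : D ≠ 0) (hnull : B F F + 2 * D * E = 0)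
    (h₁ : B F F₁ + D * E₁ + E * D₁ = 0) (h₂ : B F F₂ + D * E₂ + E * D₂ = 0) :
    B (D⁻¹ • F₁ - ((D ^ 2)⁻¹ * D₁) • F) (D⁻¹ • F₂ - ((D ^ 2)⁻¹ * D₂) • F) =
      (D ^ 2)⁻¹ * (B F₁ F₂ + D₁ * E₂ + E₁ * D₂) := by
  simp only [map_sub, map_smul, LinearMap.sub_apply, LinearMap.smul_apply, smul_eq_mul,
    hB.eq F₁ F]
  field_simp
  linear_combination (-(D * D₂)) * h₁ - D * D₁ * h₂ + D₁ * D₂ * hnull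

end Projectivization

section Calculus

variable {𝕜 E V : Type*} [NontriviallyNormedField 𝕜] [NormedAddCommGroup E] [NormedSpace 𝕜 E]
  [NormedAddCommGroup V] [NormedSpace 𝕜 V] {D : E → 𝕜} {F : E → V} {D' : E →L[𝕜] 𝕜}
  {F' : E →L[𝕜] V} {x : E}

theorem HasFDerivAt.inv_smul (hD : HasFDerivAt D D' x) (hF : HasFDerivAt F F' x) (hx : D x ≠ 0) :
    HasFDerivAt (fun y => (D y)⁻¹ • F y)
      ((D x)⁻¹ • F' - ((D x ^ 2)⁻¹ • D').smulRight (F x)) x := by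
  refine (((hasFDerivAt_inv hx).comp x hD).smul hF).congr_fderiv ?_
  ext v
  simp [sub_eq_add_neg, mul_comm]

end Calculus

theorem Matrix.transpose_toMatrix'_mul_mul_eq_smul {R n : Type*} [CommRing R] [Fintype n]
    [DecidableEq n] {M : Matrix n n R} {L : (n → R) →ₗ[R] n → R} {k : R}
    (hL : ∀ v w, M.toBilin' (L v) (L w) = k * M.toBilin' v w) :
    (LinearMap.toMatrix' L)ᵀ * M * LinearMap.toMatrix' L = k • M := by
  have : M.toBilin'.comp L L = k • M.toBilin' := LinearMap.ext₂ hL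
  simpa using congrArg BilinForm.toMatrix' this

theorem jacobianAt_eq_toMatrix' {p q : ℕ} (φ : (Fin (p + q) → ℝ) → Fin (p + q) → ℝ)
    (x : Fin (p + q) → ℝ) :
    jacobianAt p q φ x = LinearMap.toMatrix' (fderiv ℝ φ x : (Fin (p + q) → ℝ) →ₗ[ℝ] _) :=
  rfl

local notation "⟪" u ", " w "⟫ₕ" => Matrix.toBilin' (hMat _ _) u w

section FlatForm

variable {p q : ℕ}

theorem hMat_mul_self : hMat p q * hMat p q = 1 := by
  rw [hMat, diagonal_mul_diagonal, ← diagonal_one]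
  congr 1
  ext i
  split_ifs <;> norm_num

theorem inv_hMat : (hMat p q)⁻¹ = hMat p q :=
  inv_eq_right_inv hMat_mul_self

theorem isSymm_toBilin'_hMat : (hMat p q).toBilin'.IsSymm :=
  Matrix.isSymm_toBilin'_iff_isSymm.mpr (by simp [Matrix.IsSymm, hMat])

theorem normSq_eq_toBilin' (x : Fin (p + q) → ℝ) : normSq p q x = ⟪x, x⟫ₕ :=
  (Matrix.toBilin'_apply' _ _ _).symm

variable {a : ℝ} (b : Fin (p + q) → ℝ) {m : Matrix (Fin (p + q)) (Fin (p + q)) ℝ}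
  (hm : mᵀ * hMat p q * m = hMat p q)
include hm

theorem toBilin'_hMat_mulVec_mulVec (v w : Fin (p + q) → ℝ) : ⟪m *ᵥ v, m *ᵥ w⟫ₕ = ⟪v, w⟫ₕ := by
  rw [← Matrix.toLin'_apply, ← Matrix.toLin'_apply, ← LinearMap.BilinForm.comp_apply,
    Matrix.toBilin'_comp, hm]

theorem toBilin'_hMat_mulVec_dVec (v : Fin (p + q) → ℝ) :
    ⟪m *ᵥ v, dVec p q a b m⟫ₕ = -a⁻¹ * (b ⬝ᵥ v) := by
  rw [dVec, map_smul, toBilin'_hMat_mulVec_mulVec hm, inv_hMat, Matrix.toBilin'_apply',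
    mulVec_mulVec, hMat_mul_self, one_mulVec, dotProduct_comm, smul_eq_mul]

theorem toBilin'_hMat_dVec_dVec (ha : a ≠ 0) :
    ⟪dVec p q a b m, dVec p q a b m⟫ₕ = -2 * a⁻¹ * cVal p q a b := by
  nth_rw 1 [dVec]
  rw [map_smul, LinearMap.smul_apply, toBilin'_hMat_mulVec_dVec b hm, cVal, inv_hMat, smul_eq_mul]
  field_simp

end FlatForm

section NullCone

variable {p q : ℕ} {a : ℝ} (b : Fin (p + q) → ℝ) {m : Matrix (Fin (p + q)) (Fin (p + q)) ℝ}
  (hm : mᵀ * hMat p q * m = hMat p q) (ha : a ≠ 0) (x : Fin (p + q) → ℝ)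
include hm ha

theorem lift_isNull :
    ⟪m *ᵥ x - ((1 / 2) * normSq p q x) • dVec p q a b m,
        m *ᵥ x - ((1 / 2) * normSq p q x) • dVec p q a b m⟫ₕ +
      2 * Dden p q a b x * (-(2 * a)⁻¹ * normSq p q x) = 0 := by
  simp only [map_sub, map_smul, LinearMap.sub_apply, LinearMap.smul_apply, smul_eq_mul,
    isSymm_toBilin'_hMat.eq (dVec p q a b m), toBilin'_hMat_mulVec_mulVec hm,
    toBilin'_hMat_mulVec_dVec b hm, toBilin'_hMat_dVec_dVec b hm ha, Dden, normSq_eq_toBilin']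
  field_simp
  ring

theorem lift_orthogonal_derivative (v : Fin (p + q) → ℝ) :
    ⟪m *ᵥ x - ((1 / 2) * normSq p q x) • dVec p q a b m, m *ᵥ v - ⟪x, v⟫ₕ • dVec p q a b m⟫ₕ +
      Dden p q a b x * (-a⁻¹ * ⟪x, v⟫ₕ) +
      (-(2 * a)⁻¹ * normSq p q x) * (b ⬝ᵥ v - cVal p q a b * ⟪x, v⟫ₕ) = 0 := by
  simp only [map_sub, map_smul, LinearMap.sub_apply, LinearMap.smul_apply, smul_eq_mul,
    isSymm_toBilin'_hMat.eq (dVec p q a b m), toBilin'_hMat_mulVec_mulVec hm,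
    toBilin'_hMat_mulVec_dVec b hm, toBilin'_hMat_dVec_dVec b hm ha, Dden, normSq_eq_toBilin']
  field_simp
  ring

theorem lift_derivative_pairing (v w : Fin (p + q) → ℝ) :
    ⟪m *ᵥ v - ⟪x, v⟫ₕ • dVec p q a b m, m *ᵥ w - ⟪x, w⟫ₕ • dVec p q a b m⟫ₕ +
      (b ⬝ᵥ v - cVal p q a b * ⟪x, v⟫ₕ) * (-a⁻¹ * ⟪x, w⟫ₕ) +
      (-a⁻¹ * ⟪x, v⟫ₕ) * (b ⬝ᵥ w - cVal p q a b * ⟪x, w⟫ₕ) = ⟪v, w⟫ₕ := by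
  simp only [map_sub, map_smul, LinearMap.sub_apply, LinearMap.smul_apply, smul_eq_mul,
    isSymm_toBilin'_hMat.eq (dVec p q a b m), toBilin'_hMat_mulVec_mulVec hm,
    toBilin'_hMat_mulVec_dVec b hm, toBilin'_hMat_dVec_dVec b hm ha]
  ring

end NullCone

section Derivatives

variable {p q : ℕ} (a : ℝ) (b : Fin (p + q) → ℝ) (m : Matrix (Fin (p + q)) (Fin (p + q)) ℝ)
  (x : Fin (p + q) → ℝ)

theorem hasFDerivAt_normSq :
    HasFDerivAt (normSq p q) ((2 : ℝ) • (hMat p q).toBilin'.toContinuousBilinearMap x) x := by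
  have h := (hMat p q).toBilin'.toContinuousBilinearMap.hasFDerivAt_of_bilinear
    (hasFDerivAt_id x) (hasFDerivAt_id x)
  refine h.congr_fderiv ?_ |>.congr_of_eventuallyEq ?_
  · ext v
    simp [two_smul, isSymm_toBilin'_hMat.eq v x]
  · exact Filter.Eventually.of_forall normSq_eq_toBilin'

theorem hasFDerivAt_Dden :
    HasFDerivAt (Dden p q a b)
      ((dotProductBilin ℝ ℝ b).toContinuousLinearMap -
        cVal p q a b • (hMat p q).toBilin'.toContinuousBilinearMap x) x := by
  have h := ((dotProductBilin ℝ ℝ b).toContinuousLinearMap.hasFDerivAt.const_add a).sub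
    ((hasFDerivAt_normSq x).const_mul ((1 / 2) * cVal p q a b))
  refine h.congr_fderiv ?_
  ext v
  simp only [one_div, _root_.sub_apply, LinearMap.coe_toContinuousLinearMap',
    dotProductBilin_apply_apply, _root_.smul_apply, LinearMap.toContinuousBilinearMap_apply,
    smul_eq_mul, sub_right_inj]
  ring

theorem hasFDerivAt_phiMap_numerator :
    HasFDerivAt (fun y => m *ᵥ y - ((1 / 2) * normSq p q y) • dVec p q a b m)
      ((Matrix.toLin' m).toContinuousLinearMap -
        ((hMat p q).toBilin'.toContinuousBilinearMap x).smulRight (dVec p q a b m)) x := by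
  have h := (Matrix.toLin' m).toContinuousLinearMap.hasFDerivAt.sub
    (((hasFDerivAt_normSq x).const_mul (1 / 2)).smul_const (dVec p q a b m))
  refine h.congr_fderiv ?_
  ext v
  simp

end Derivatives

theorem statement2_general (p q : ℕ)
    (a : ℝ) (ha : 0 < a) (b : Fin (p + q) → ℝ)
    (m : Matrix (Fin (p + q)) (Fin (p + q)) ℝ)
    (hm : mᵀ * hMat p q * m = hMat p q)
    (x : Fin (p + q) → ℝ) (hx : Dden p q a b x ≠ 0) :
    DifferentiableAt ℝ (phiMap p q a b m) x ∧
    (jacobianAt p q (phiMap p q a b m) x)ᵀ * hMat p q *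
        jacobianAt p q (phiMap p q a b m) x
      = (OmegaFn p q a b x) ^ 2 • hMat p q := by
  have hφ : HasFDerivAt (phiMap p q a b m) _ x :=
    (hasFDerivAt_Dden a b x).inv_smul (hasFDerivAt_phiMap_numerator a b m x) hx
  refine ⟨hφ.differentiableAt, ?_⟩
  rw [jacobianAt_eq_toMatrix', hφ.fderiv, OmegaFn]
  refine transpose_toMatrix'_mul_mul_eq_smul fun v w => ?_
  have key := isSymm_toBilin'_hMat.apply_inv_smul_sub_smul hx (lift_isNull b hm ha.ne' x)
    (lift_orthogonal_derivative b hm ha.ne' x v) (lift_orthogonal_derivative b hm ha.ne' x w)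
  rw [lift_derivative_pairing b hm ha.ne' x v w] at key
  simpa using key

/-- At points where the denominator does not vanish, `φ_{a,b,m}` is differentiable
and its Jacobian `J` satisfies `Jᵀ h J = Ω² h`: `φ` is a conformal transformation
of the flat metric `h` with conformal factor `Ω`. -/
theorem statement2 (p q : ℕ) (hn : 3 ≤ p + q)
    (a : ℝ) (ha : 0 < a) (b : Fin (p + q) → ℝ)
    (m : Matrix (Fin (p + q)) (Fin (p + q)) ℝ)
    (hm : mᵀ * hMat p q * m = hMat p q)
    (x : Fin (p + q) → ℝ) (hx : Dden p q a b x ≠ 0) :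
    DifferentiableAt ℝ (phiMap p q a b m) x ∧
    (jacobianAt p q (phiMap p q a b m) x)ᵀ * hMat p q *
        jacobianAt p q (phiMap p q a b m) x
      = (OmegaFn p q a b x) ^ 2 • hMat p q :=
  statement2_general p q a ha b m hm x hx
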